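/- The kernel K(x,y,z) = B z^{-1} P(x, y, B z^{-1})^{-1/2}, viewed as an element of z^{-1}ℂ[z^{-1}][[x,y]] where P(x,y,z) = (B - xy - yz - xz)^2 - 4xyz(x+y+z+A), satisfies L_x K = L_y K, where L is the D2 operator L = f(t)∂_t² + f'(t)∂_t + t with f(t) = t³ + At² + Bt. -/

import Mathlib

/-
Write `K = c u` with `c = B z⁻¹` a constant and `u² P = 1`. Differentiating `u² P = 1` once and
twice expresses `∂u` and `∂²u` through `u³`, `u⁵` and the derivatives of `P`; together with
`u = u⁵ P²` and `u³ = u⁵ P` this gives `4 L_t K = c u⁵ N_t(P)` for the polynomial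
`N_t(P) = f(t) (3 P_t² - 2 P P_tt) - 2 f'(t) P P_t + 4 t P²`. The theorem thus reduces to the
polynomial identity `N_x(P) = N_y(P)`, which holds for every value of the third argument of `P`.
-/

/-- Formal partial derivative in the `i`-th variable of a multivariate power series. -/
noncomputable def pderivSeries {R : Type*} [CommRing R] (i : Fin 2)
    (f : MvPowerSeries (Fin 2) R) : MvPowerSeries (Fin 2) R :=
  fun e => (e i + 1 : ℕ) • f (e + Finsupp.single i 1)

/-- The D2 operator `L = f(t) ∂² + f'(t) ∂ + t` acting in the `i`-th variable,
with `f(t) = t³ + A t² + B t`. -/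
noncomputable def D2op {R : Type*} [CommRing R] (A B : R) (i : Fin 2)
    (K : MvPowerSeries (Fin 2) R) : MvPowerSeries (Fin 2) R :=
  (MvPowerSeries.X i ^ 3 + (MvPowerSeries.C : R →+* MvPowerSeries (Fin 2) R) A * MvPowerSeries.X i ^ 2
      + (MvPowerSeries.C : R →+* MvPowerSeries (Fin 2) R) B * MvPowerSeries.X i) *
    pderivSeries i (pderivSeries i K) +
  (3 * MvPowerSeries.X i ^ 2 + (MvPowerSeries.C : R →+* MvPowerSeries (Fin 2) R) (2 * A) * MvPowerSeries.X i
      + (MvPowerSeries.C : R →+* MvPowerSeries (Fin 2) R) B) * pderivSeries i K +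
  MvPowerSeries.X i * K

namespace Derivation

variable {R S : Type*} [CommRing R] [CommRing S] [Algebra R S] (D : Derivation R S S) {u P : S}

theorem two_mul_apply_of_mul_self_mul_eq_one (h : u * u * P = 1) :
    2 * D u = -(u ^ 3 * D P) := by
  have hD := congrArg D h
  simp only [leibniz, map_one_eq_zero, smul_eq_mul] at hD
  linear_combination u * hD - 2 * D u * h

theorem four_mul_apply_apply_of_mul_self_mul_eq_one (h : u * u * P = 1) :
    4 * D (D u) = 3 * u ^ 5 * D P ^ 2 - 2 * u ^ 3 * D (D P) := by
  have h₁ := D.two_mul_apply_of_mul_self_mul_eq_one h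
  have h₂ := congrArg D h₁
  have hD2 : D 2 = 0 := by simpa using D.map_natCast 2
  simp only [leibniz, leibniz_pow, map_neg, hD2, smul_eq_mul, nsmul_eq_mul] at h₂
  linear_combination 2 * h₂ - 3 * u ^ 2 * D P * h₁

theorem four_mul_secondOrder_of_mul_self_mul_eq_one (h : u * u * P = 1) {c : S}
    (hc : D c = 0) (a b t : S) :
    4 * (a * D (D (c * u)) + b * D (c * u) + t * (c * u)) =
      c * u ^ 5 * (a * (3 * D P ^ 2 - 2 * P * D (D P)) - 2 * b * P * D P + 4 * t * P ^ 2) := by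
  have h₁ := D.two_mul_apply_of_mul_self_mul_eq_one h
  have h₂ := D.four_mul_apply_apply_of_mul_self_mul_eq_one h
  have hcu : D (c * u) = c * D u := by simp [leibniz, hc]
  have hcu' : D (D (c * u)) = c * D (D u) := by simp [hcu, leibniz, hc]
  rw [hcu', hcu]
  linear_combination c * a * h₂ + 2 * c * b * h₁ +
    c * (2 * a * u ^ 3 * D (D P) + 2 * b * u ^ 3 * D P - 4 * t * u * (1 + u * u * P)) * h

end Derivation

section Kernel

variable {R S : Type*} [CommRing R] [CommRing S] [Algebra R S]

-- The paper's `P(x, y, z)`, with `z` and the coefficients `A`, `B` taken as scalars.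
def kernelPoly (A B z : R) (x y : S) : S :=
  (algebraMap R S B - x * y - y * algebraMap R S z - x * algebraMap R S z) ^ 2
    - 4 * x * y * algebraMap R S z * (x + y + algebraMap R S z + algebraMap R S A)

theorem kernelPoly_comm (A B z : R) (x y : S) : kernelPoly A B z x y = kernelPoly A B z y x := by
  unfold kernelPoly; ring

def D2numerator (D : Derivation R S S) (A B : R) (t P : S) : S :=
  (t ^ 3 + algebraMap R S A * t ^ 2 + algebraMap R S B * t) * (3 * D P ^ 2 - 2 * P * D (D P))
    - 2 * (3 * t ^ 2 + algebraMap R S (2 * A) * t + algebraMap R S B) * P * D P + 4 * t * P ^ 2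

namespace Derivation

variable (D : Derivation R S S) (A B z : R) {x y : S}

theorem apply_kernelPoly (hx : D x = 1) (hy : D y = 0) :
    D (kernelPoly A B z x y) =
      -2 * (algebraMap R S B - x * y - y * algebraMap R S z - x * algebraMap R S z) *
          (y + algebraMap R S z)
        - 4 * y * algebraMap R S z * (2 * x + y + algebraMap R S z + algebraMap R S A) := by
  have hD4 : D 4 = 0 := by simpa using D.map_natCast 4
  simp only [kernelPoly, map_add, map_sub, leibniz, leibniz_pow, map_algebraMap, hx, hy, hD4,
    smul_eq_mul, nsmul_eq_mul]
  ring

theorem apply_apply_kernelPoly (hx : D x = 1) (hy : D y = 0) :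
    D (D (kernelPoly A B z x y)) = 2 * (y + algebraMap R S z) ^ 2 - 8 * y * algebraMap R S z := by
  have hD2 : D 2 = 0 := by simpa using D.map_natCast 2
  have hD4 : D 4 = 0 := by simpa using D.map_natCast 4
  simp only [D.apply_kernelPoly A B z hx hy, map_add, map_sub, map_neg, leibniz, map_algebraMap,
    hx, hy, hD2, hD4, smul_eq_mul]
  ring

end Derivation

theorem D2numerator_kernelPoly_symm (D₁ D₂ : Derivation R S S) (A B z : R) {x y : S}
    (h₁x : D₁ x = 1) (h₁y : D₁ y = 0) (h₂x : D₂ x = 0) (h₂y : D₂ y = 1) :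
    D2numerator D₁ A B x (kernelPoly A B z x y) = D2numerator D₂ A B y (kernelPoly A B z x y) := by
  rw [D2numerator, D2numerator, D₁.apply_apply_kernelPoly A B z h₁x h₁y,
    D₁.apply_kernelPoly A B z h₁x h₁y, kernelPoly_comm A B z x y,
    D₂.apply_apply_kernelPoly A B z h₂y h₂x, D₂.apply_kernelPoly A B z h₂y h₂x, kernelPoly,
    map_mul, map_ofNat]
  ring

end Kernel

section PowerSeries

open MvPowerSeries

variable {R : Type*} [CommRing R]

theorem pderivSeries_eq_pderiv (i : Fin 2) : pderivSeries i = ⇑(pderiv R i) := by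
  ext f e
  change (e i + 1 : ℕ) • coeff (e + Finsupp.single i 1) f = _
  rw [coeff_pderiv, nsmul_eq_mul, mul_comm, Nat.cast_add_one]

theorem four_mul_D2op_C_mul (A B c : R) (i : Fin 2) {u P : MvPowerSeries (Fin 2) R}
    (h : u * u * P = 1) :
    4 * D2op A B i (C c * u) = C c * u ^ 5 * D2numerator (pderiv R i) A B (X i) P := by
  rw [D2op, D2numerator, pderivSeries_eq_pderiv, c_eq_algebraMap]
  exact (pderiv R i).four_mul_secondOrder_of_mul_self_mul_eq_one h pderiv_C _ _ _

end PowerSeries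

-- `ℂ[z⁻¹][[x, y]]` is `MvPowerSeries (Fin 2) ℂ[X]` with `X = z⁻¹`, and `P^{-1/2}` is any `u`
-- with `u² P = 1`.
/-- The kernel `K(x,y,z) = B z⁻¹ P(x,y,Bz⁻¹)^{-1/2}` satisfies `L_x K = L_y K`.
We work in `ℂ[z⁻¹][[x,y]]`, realized as `MvPowerSeries (Fin 2) (Polynomial ℂ)`
with the polynomial variable `w = z⁻¹`, `x = X 0`, `y = X 1`.  The inverse square
root is encoded by any `u` with `u² · P(x,y,Bw) = 1`, and `K = (Bw) · u`. -/
theorem D2_kernel_symmetry (A B : ℂ)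
    (u : MvPowerSeries (Fin 2) (Polynomial ℂ))
    (hu : u * u *
      (((MvPowerSeries.C : Polynomial ℂ →+* MvPowerSeries (Fin 2) (Polynomial ℂ)) (Polynomial.C B)
          - MvPowerSeries.X 0 * MvPowerSeries.X 1
          - MvPowerSeries.X 1 * (MvPowerSeries.C : Polynomial ℂ →+* MvPowerSeries (Fin 2) (Polynomial ℂ))
              (Polynomial.C B * Polynomial.X)
          - MvPowerSeries.X 0 * (MvPowerSeries.C : Polynomial ℂ →+* MvPowerSeries (Fin 2) (Polynomial ℂ))
              (Polynomial.C B * Polynomial.X)) ^ 2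
        - 4 * MvPowerSeries.X 0 * MvPowerSeries.X 1 *
            (MvPowerSeries.C : Polynomial ℂ →+* MvPowerSeries (Fin 2) (Polynomial ℂ)) (Polynomial.C B * Polynomial.X) *
            (MvPowerSeries.X 0 + MvPowerSeries.X 1
              + (MvPowerSeries.C : Polynomial ℂ →+* MvPowerSeries (Fin 2) (Polynomial ℂ)) (Polynomial.C B * Polynomial.X)
              + (MvPowerSeries.C : Polynomial ℂ →+* MvPowerSeries (Fin 2) (Polynomial ℂ)) (Polynomial.C A))) = 1) :
    D2op (Polynomial.C A) (Polynomial.C B) 0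
        ((MvPowerSeries.C : Polynomial ℂ →+* MvPowerSeries (Fin 2) (Polynomial ℂ)) (Polynomial.C B * Polynomial.X) * u) =
      D2op (Polynomial.C A) (Polynomial.C B) 1
        ((MvPowerSeries.C : Polynomial ℂ →+* MvPowerSeries (Fin 2) (Polynomial ℂ)) (Polynomial.C B * Polynomial.X) * u) := by
  have hP : u * u * kernelPoly (Polynomial.C A) (Polynomial.C B) (Polynomial.C B * Polynomial.X)
      (MvPowerSeries.X 0 : MvPowerSeries (Fin 2) (Polynomial ℂ)) (MvPowerSeries.X 1) = 1 := by
    rwa [kernelPoly, ← MvPowerSeries.c_eq_algebraMap]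
  have h4 : IsUnit (4 : MvPowerSeries (Fin 2) (Polynomial ℂ)) := by
    simpa only [map_ofNat] using
      (IsUnit.mk0 (4 : ℂ) (by norm_num)).map (algebraMap ℂ (MvPowerSeries (Fin 2) (Polynomial ℂ)))
  refine h4.mul_left_cancel ?_
  rw [four_mul_D2op_C_mul _ _ _ _ hP, four_mul_D2op_C_mul _ _ _ _ hP,
    D2numerator_kernelPoly_symm _ _ _ _ _ MvPowerSeries.pderiv_X_self
      (MvPowerSeries.pderiv_X_of_ne (by decide)) (MvPowerSeries.pderiv_X_of_ne (by decide))
      MvPowerSeries.pderiv_X_self]
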